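/- Monotonicity of the comparison function K: let m ≥ 1 be an integer and s a generalized sine function of order m. For φ ∈ [π_m/2, π_m) define K(φ) := 2·(π_m − φ + s(φ)·s'(φ))/s(φ)^{m+1}. Then K is strictly decreasing on [π_m/2, π_m), K(π_m/2) = π_m, and K(φ) → 0 as φ → π_m from the left. -/

import Mathlib

/-- A generalized sine function of order `m ≥ 1`: a twice continuously differentiable
function `s : ℝ → ℝ` with `s'' = -m * s^(2m-1)`, `s 0 = 0` and `s' 0 = 1`. -/
def IsGenSine (m : ℕ) (s : ℝ → ℝ) : Prop :=
  ContDiff ℝ 2 s ∧ (∀ x : ℝ, deriv (deriv s) x = -(m : ℝ) * s x ^ (2 * m - 1)) ∧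
    s 0 = 0 ∧ deriv s 0 = 1

/-- The generalized half-period `π_m := 2 ∫₀¹ (1 - t^(2m))^(-1/2) dt`. -/
noncomputable def piGen (m : ℕ) : ℝ :=
  2 * ∫ t in (0:ℝ)..(1:ℝ), ((1 - t ^ (2 * m) : ℝ) ^ (-(1:ℝ)/2))

open Filter


section Aux
open Set intervalIntegral MeasureTheory

noncomputable def gsf (m : ℕ) (t : ℝ) : ℝ := (1 - t ^ (2*m) : ℝ) ^ ((-(1:ℝ))/2)

noncomputable def gsF (m : ℕ) (u : ℝ) : ℝ := ∫ t in (0:ℝ)..u, gsf m t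

lemma gsf_base_pos (m : ℕ) (hm : 1 ≤ m) {t : ℝ} (h0 : 0 ≤ t) (h1 : t < 1) : 0 < 1 - t ^ (2*m) := by
  have : t ^ (2*m) < 1 := pow_lt_one₀ h0 h1 (by omega)
  linarith

lemma gsf_contOn (m : ℕ) (hm : 1 ≤ m) : ContinuousOn (gsf m) (Ico 0 1) := by
  apply (continuous_const.sub (continuous_pow (2*m))).continuousOn.rpow_const
  intro x hx
  exact Or.inl (ne_of_gt (gsf_base_pos m hm hx.1 hx.2))

lemma gsf_nonneg (m : ℕ) {t : ℝ} (h0 : 0 ≤ t) (h1 : t ≤ 1) : 0 ≤ gsf m t := by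
  apply Real.rpow_nonneg
  have : t ^ (2*m) ≤ 1 := pow_le_one₀ h0 h1
  linarith

lemma gsf_one_le (m : ℕ) (hm : 1 ≤ m) {t : ℝ} (h0 : 0 ≤ t) (h1 : t < 1) : 1 ≤ gsf m t := by
  have hb := gsf_base_pos m hm h0 h1
  rw [gsf, show ((-(1:ℝ))/2) = -(1/2) by norm_num, Real.rpow_neg (by linarith)]
  rw [one_le_inv_iff₀]
  exact ⟨Real.rpow_pos_of_pos hb _, Real.rpow_le_one (by linarith) (by nlinarith [pow_nonneg h0 (2*m)]) (by norm_num)⟩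

lemma gsf_int (m : ℕ) (hm : 1 ≤ m) : IntervalIntegrable (gsf m) volume 0 1 := by
  have hg : IntervalIntegrable (fun t : ℝ => (1 - t) ^ ((-(1:ℝ))/2)) volume 0 1 := by
    have := ((intervalIntegrable_rpow' (a := 0) (b := 1) (r := (-(1:ℝ))/2) (by norm_num)).comp_sub_left 1).symm
    simpa using this
  apply hg.mono_fun
  · have hr : volume.restrict (uIoc (0:ℝ) 1) = volume.restrict (Ioo (0:ℝ) 1) := by
      rw [uIoc_of_le (by norm_num : (0:ℝ) ≤ 1)]
      exact Measure.restrict_congr_set Ioo_ae_eq_Ioc.symm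
    rw [hr]
    exact ((gsf_contOn m hm).mono (Ioo_subset_Ico_self)).aestronglyMeasurable measurableSet_Ioo
  · filter_upwards [ae_restrict_mem measurableSet_uIoc] with t ht
    rw [uIoc_of_le (by norm_num : (0:ℝ) ≤ 1)] at ht
    simp only [Real.norm_eq_abs]
    rcases eq_or_lt_of_le ht.2 with heq | h1
    · subst heq
      rw [gsf, one_pow, sub_self, Real.zero_rpow (by norm_num), abs_zero]
    · rw [abs_of_nonneg (gsf_nonneg m ht.1.le ht.2), abs_of_nonneg (Real.rpow_nonneg (by linarith) _)]
      apply Real.rpow_le_rpow_of_nonpos (by linarith)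
      · have : t ^ (2*m) ≤ t := pow_le_of_le_one ht.1.le ht.2 (by positivity)
        linarith
      · norm_num

lemma gsf_base_pos' (m : ℕ) (hm : 1 ≤ m) {t : ℝ} (h : |t| < 1) : 0 < 1 - t ^ (2*m) := by
  have h1 : t ^ (2*m) ≤ |t| ^ (2*m) := by
    rw [← abs_pow]; exact le_abs_self _
  have h2 : |t| ^ (2*m) < 1 := pow_lt_one₀ (abs_nonneg t) h (by omega)
  linarith

lemma gsf_contAt (m : ℕ) (hm : 1 ≤ m) {u : ℝ} (h1 : |u| < 1) :
    ContinuousAt (gsf m) u := by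
  have hb : 0 < 1 - u ^ (2*m) := gsf_base_pos' m hm h1
  apply ContinuousAt.rpow_const
  · exact (continuous_const.sub (continuous_pow (2*m))).continuousAt
  · exact Or.inl (by simpa using ne_of_gt hb)

lemma gsf_int' (m : ℕ) (hm : 1 ≤ m) {u : ℝ} (h0 : 0 ≤ u) (h1 : u ≤ 1) :
    IntervalIntegrable (gsf m) volume 0 u :=
  (gsf_int m hm).mono_set (by
    rw [uIcc_of_le h0, uIcc_of_le (by norm_num : (0:ℝ) ≤ 1)]
    exact Set.Icc_subset_Icc le_rfl h1)

lemma gsF_hasDeriv (m : ℕ) (hm : 1 ≤ m) {u : ℝ} (h0 : 0 ≤ u) (h1 : u < 1) :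
    HasDerivAt (gsF m) (gsf m u) u := by
  have habs : |u| < 1 := abs_lt.mpr ⟨by linarith, h1⟩
  apply intervalIntegral.integral_hasDerivAt_right (gsf_int' m hm h0 h1.le)
  · refine ⟨Ioo (-1:ℝ) 1, IsOpen.mem_nhds isOpen_Ioo ⟨by linarith, h1⟩, ?_⟩
    exact ContinuousOn.aestronglyMeasurable
      (fun x hx => (gsf_contAt m hm (abs_lt.mpr hx)).continuousWithinAt) measurableSet_Ioo
  · exact gsf_contAt m hm habs

lemma gsF_contOn (m : ℕ) (hm : 1 ≤ m) : ContinuousOn (gsF m) (Icc 0 1) := by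
  have := intervalIntegral.continuousOn_primitive_interval'
    (μ := volume) (b₁ := (0:ℝ)) (b₂ := 1) (a := 0) (gsf_int m hm)
    (by rw [uIcc_of_le (by norm_num : (0:ℝ) ≤ 1)]; exact ⟨le_rfl, by norm_num⟩)
  rwa [uIcc_of_le (by norm_num : (0:ℝ) ≤ 1)] at this

lemma gsF_zero (m : ℕ) : gsF m 0 = 0 := intervalIntegral.integral_same

lemma gsF_nonneg (m : ℕ) (hm : 1 ≤ m) {u : ℝ} (h0 : 0 ≤ u) (h1 : u ≤ 1) : 0 ≤ gsF m u := by
  apply intervalIntegral.integral_nonneg h0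
  intro t ht
  exact gsf_nonneg m ht.1 (le_trans ht.2 h1)

lemma gsF_le_one (m : ℕ) (hm : 1 ≤ m) {u : ℝ} (h0 : 0 ≤ u) (h1 : u ≤ 1) :
    gsF m u ≤ gsF m 1 := by
  have hsplit : gsF m u + (∫ t in u..(1:ℝ), gsf m t) = gsF m 1 :=
    intervalIntegral.integral_add_adjacent_intervals (gsf_int' m hm h0 h1)
      ((gsf_int m hm).mono_set (by
        rw [uIcc_of_le h1, uIcc_of_le (by norm_num : (0:ℝ) ≤ 1)]
        exact Set.Icc_subset_Icc h0 le_rfl))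
  have : 0 ≤ ∫ t in u..(1:ℝ), gsf m t :=
    intervalIntegral.integral_nonneg h1 (fun t ht => gsf_nonneg m (le_trans h0 ht.1) ht.2)
  linarith

lemma gsF_one_pos (m : ℕ) (hm : 1 ≤ m) : 0 < gsF m 1 := by
  apply intervalIntegral.intervalIntegral_pos_of_pos_on (gsf_int m hm)
  · intro x hx
    have := gsf_one_le m hm hx.1.le hx.2
    linarith
  · norm_num

section GS
variable {m : ℕ} {s : ℝ → ℝ} (hm : 1 ≤ m) (hs : IsGenSine m s)
include hs

lemma gs_diff : Differentiable ℝ s := hs.1.differentiable (by norm_num)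

lemma gs_diff2 : Differentiable ℝ (deriv s) := by
  have h : ContDiff ℝ (1+1 : WithTop ℕ∞) s := by simpa [one_add_one_eq_two] using hs.1
  exact ((contDiff_succ_iff_deriv.mp h).2.2).differentiable (by norm_num)

lemma gs_cont : Continuous s := (gs_diff hs).continuous

lemma gs_cont2 : Continuous (deriv s) := (gs_diff2 hs).continuous

lemma gs_cont3 : Continuous (deriv (deriv s)) := by
  have : deriv (deriv s) = fun x => -(m : ℝ) * s x ^ (2 * m - 1) := funext hs.2.1
  rw [this]
  exact continuous_const.mul ((gs_cont hs).pow _)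

lemma gs_hasDeriv (x : ℝ) : HasDerivAt s (deriv s x) x := (gs_diff hs x).hasDerivAt

lemma gs_hasDeriv2 (x : ℝ) : HasDerivAt (deriv s) (-(m : ℝ) * s x ^ (2 * m - 1)) x := by
  have := (gs_diff2 hs x).hasDerivAt
  rwa [hs.2.1 x] at this

include hm in
lemma gs_energy (x : ℝ) : (deriv s x)^2 + (s x)^(2*m) = 1 := by
  set E : ℝ → ℝ := fun x => (deriv s x)^2 + (s x)^(2*m) with hE
  have hd : ∀ y, HasDerivAt E 0 y := by
    intro y
    have h1 : HasDerivAt (fun x => (deriv s x)^2)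
        (2 * (deriv s y)^1 * (-(m : ℝ) * s y ^ (2 * m - 1))) y := by
      exact ((gs_hasDeriv2 hs y).pow 2).congr_deriv (by norm_num)
    have h2 : HasDerivAt (fun x => (s x)^(2*m))
        ((2*m : ℕ) * (s y)^(2*m - 1) * deriv s y) y := by
      exact (gs_hasDeriv hs y).pow (2*m)
    have := h1.add h2
    refine this.congr_deriv (Eq.symm ?_)
    push_cast [Nat.cast_sub]
    ring
  have hconst : E x = E 0 := by
    apply is_const_of_deriv_eq_zero (fun y => (hd y).differentiableAt)
    intro y; exact (hd y).deriv
  show E x = 1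
  rw [hconst, hE]
  simp [hs.2.2.1, hs.2.2.2, zero_pow (by omega : 2*m ≠ 0)]

end GS

section GS2
variable {m : ℕ} {s : ℝ → ℝ} (hm : 1 ≤ m) (hs : IsGenSine m s)
include hm hs

lemma gs_rise_core {b : ℝ} (hb : 0 ≤ b) (hpos : ∀ t ∈ Ico 0 b, 0 < deriv s t) :
    s b ∈ Icc 0 1 ∧ gsF m (s b) = b := by
  have hmono : StrictMonoOn s (Icc 0 b) := by
    apply strictMonoOn_of_deriv_pos (convex_Icc 0 b) (gs_cont hs).continuousOn
    intro x hx
    rw [interior_Icc] at hx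
    exact hpos x ⟨hx.1.le, hx.2⟩
  have hs0 : ∀ x ∈ Icc 0 b, 0 ≤ s x := by
    intro x hx
    have := hmono.monotoneOn (left_mem_Icc.mpr hb) hx hx.1
    rwa [hs.2.2.1] at this
  have hsble : ∀ x ∈ Icc 0 b, s x ≤ s b := fun x hx =>
    hmono.monotoneOn hx (right_mem_Icc.mpr hb) hx.2
  have hle1b : s b ≤ 1 := by
    by_contra hgt
    push_neg at hgt
    have h1 : (1:ℝ) ≤ (s b)^(2*m) := one_le_pow₀ hgt.le
    have h2 := gs_energy hm hs b
    have h3 : deriv s b ^ 2 = 0 := by nlinarith [sq_nonneg (deriv s b), pow_le_pow_left₀ (by linarith : (0:ℝ) ≤ 1) hgt.le (2*m)]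
    nlinarith [one_lt_pow₀ hgt (by omega : 2*m ≠ 0)]
  have hlt1 : ∀ x ∈ Ico 0 b, s x < 1 := by
    intro x hx
    have he := gs_energy hm hs x
    have hp := hpos x hx
    have hpow : (s x)^(2*m) < 1 := by nlinarith
    by_contra hge
    push_neg at hge
    exact absurd hpow (not_lt.mpr (one_le_pow₀ hge))
  have hmaps : MapsTo s (Icc 0 b) (Icc 0 1) := fun x hx =>
    ⟨hs0 x hx, le_trans (hsble x hx) hle1b⟩
  set H : ℝ → ℝ := fun φ => gsF m (s φ) - φ with hH
  have hHc : ContinuousOn H (Icc 0 b) :=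
    (((gsF_contOn m hm).comp (gs_cont hs).continuousOn hmaps).sub continuousOn_id)
  have hder : ∀ x ∈ Ico 0 b, HasDerivWithinAt H 0 (Ici x) x := by
    intro x hx
    have hu0 : 0 ≤ s x := hs0 x ⟨hx.1, hx.2.le⟩
    have hu1 : s x < 1 := hlt1 x hx
    have hF : HasDerivAt (gsF m) (gsf m (s x)) (s x) := gsF_hasDeriv m hm hu0 hu1
    have hcomp : HasDerivAt (fun φ => gsF m (s φ)) (gsf m (s x) * deriv s x) x := by
      have := hF.comp x (gs_hasDeriv hs x)
      exact this
    have he := gs_energy hm hs x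
    have hp := hpos x hx
    have hbase : 0 < 1 - (s x)^(2*m) := by nlinarith
    have hsq : deriv s x = Real.sqrt (1 - (s x)^(2*m)) := by
      have : (1 - (s x)^(2*m)) = (deriv s x)^2 := by linarith
      rw [this, Real.sqrt_sq hp.le]
    have hval : gsf m (s x) * deriv s x = 1 := by
      rw [hsq, Real.sqrt_eq_rpow, gsf, ← Real.rpow_add hbase]
      norm_num
    have : HasDerivAt H 0 x := by
      have := hcomp.sub (hasDerivAt_id x)
      rw [hval] at this
      exact this.congr_deriv (by norm_num)
    exact this.hasDerivWithinAt
  have hconst := constant_of_has_deriv_right_zero hHc hder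
  have hb2 := hconst b (right_mem_Icc.mpr hb)
  simp only [hH, hs.2.2.1, gsF_zero, sub_zero, zero_sub] at hb2
  refine ⟨⟨hs0 b (right_mem_Icc.mpr hb), hle1b⟩, by linarith⟩

end GS2

lemma piGen_eq (m : ℕ) : piGen m = 2 * gsF m 1 := rfl

section GS3
variable {m : ℕ} {s : ℝ → ℝ} (hm : 1 ≤ m) (hs : IsGenSine m s)
include hm hs

lemma gs_rise :
    deriv s (piGen m / 2) = 0 ∧ s (piGen m / 2) = 1 ∧
      ∀ x ∈ Ico 0 (piGen m / 2), 0 < deriv s x := by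
  have hp1 : piGen m / 2 = gsF m 1 := by rw [piGen_eq]; ring
  set Z := {x : ℝ | 0 ≤ x} ∩ {x : ℝ | deriv s x ≤ 0} with hZ
  have hZclosed : IsClosed Z :=
    (isClosed_le continuous_const continuous_id).inter
      (isClosed_le (gs_cont2 hs) continuous_const)
  have hZne : Z.Nonempty := by
    by_contra hne
    rw [Set.not_nonempty_iff_eq_empty] at hne
    have hpos : ∀ t ∈ Ico (0:ℝ) (gsF m 1 + 1), 0 < deriv s t := by
      intro t ht
      by_contra h
      push_neg at h
      have : t ∈ Z := ⟨ht.1, h⟩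
      rw [hne] at this
      exact this
    have hcore := gs_rise_core hm hs (by linarith [gsF_one_pos m hm] : (0:ℝ) ≤ gsF m 1 + 1) hpos
    have hle := gsF_le_one m hm hcore.1.1 hcore.1.2
    rw [hcore.2] at hle
    linarith
  set T := sInf Z with hT
  have hbdd : BddBelow Z := ⟨0, fun x hx => hx.1⟩
  have hTZ : T ∈ Z := IsClosed.csInf_mem hZclosed hZne hbdd
  have hT0le : (0:ℝ) ≤ T := hTZ.1
  have hTpos0 : ∀ x ∈ Ico 0 T, 0 < deriv s x := by
    intro x hx
    by_contra h
    push_neg at h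
    exact absurd (csInf_le hbdd ⟨hx.1, h⟩) (not_le.mpr hx.2)
  have hT0 : 0 < T := by
    rcases eq_or_lt_of_le hT0le with h | h
    · exfalso
      have := hTZ.2
      simp only [mem_setOf_eq, ← h] at this
      rw [hs.2.2.2] at this
      linarith
    · exact h
  have hTd0 : deriv s T = 0 := by
    have hle : deriv s T ≤ 0 := hTZ.2
    have hge : 0 ≤ deriv s T := by
      have htend : Tendsto (deriv s) (nhdsWithin T (Iio T)) (nhds (deriv s T)) :=
        ((gs_cont2 hs).tendsto T).mono_left nhdsWithin_le_nhds
      have hev : ∀ᶠ x in nhdsWithin T (Iio T), 0 ≤ deriv s x := by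
        filter_upwards [Ioo_mem_nhdsLT_of_mem (⟨hT0, le_rfl⟩ : T ∈ Ioc 0 T)] with x hx
        exact (hTpos0 x ⟨hx.1.le, hx.2⟩).le
      exact ge_of_tendsto htend hev
    linarith
  have hcore := gs_rise_core hm hs hT0le hTpos0
  have hsT : s T = 1 := by
    have he := gs_energy hm hs T
    rw [hTd0] at he
    rcases lt_trichotomy (s T) 1 with h | h | h
    · have : (s T)^(2*m) < 1 := pow_lt_one₀ hcore.1.1 h (by omega)
      nlinarith
    · exact h
    · have := one_lt_pow₀ h (by omega : 2*m ≠ 0)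
      nlinarith
  have hTval : T = gsF m 1 := by
    have := hcore.2
    rw [hsT] at this
    exact this.symm
  rw [hp1, ← hTval]
  exact ⟨hTd0, hsT, hTpos0⟩

end GS3

section GS4
variable {m : ℕ} {s : ℝ → ℝ} (hm : 1 ≤ m) (hs : IsGenSine m s)
include hm hs

lemma gs_fall_neg {x : ℝ} (hx : piGen m / 2 < x)
    (hpos : ∀ t ∈ Ioo (piGen m / 2) x, 0 < s t) (hxe : 0 ≤ s x) :
    ∀ t ∈ Ioc (piGen m / 2) x, deriv s t < 0 := by
  obtain ⟨hd0, hs1, _⟩ := gs_rise hm hs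
  set P := piGen m / 2 with hP
  -- local negativity of deriv s just after P
  have hU : IsOpen {y : ℝ | deriv (deriv s) y < 0} := isOpen_lt (gs_cont3 hs) continuous_const
  have hPU : P ∈ {y : ℝ | deriv (deriv s) y < 0} := by
    simp only [mem_setOf_eq, hs.2.1, hs1, one_pow]
    have : (0:ℝ) < m := by exact_mod_cast hm
    linarith
  obtain ⟨ε, hε, hball⟩ := Metric.isOpen_iff.mp hU P hPU
  set δ := ε/2 with hδ
  have hδ0 : 0 < δ := by positivity
  have hlocal : ∀ t ∈ Ioc P (P + δ), deriv s t < 0 := by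
    have hanti : StrictAntiOn (deriv s) (Icc P (P + δ)) := by
      apply strictAntiOn_of_deriv_neg (convex_Icc _ _) (gs_cont2 hs).continuousOn
      intro y hy
      rw [interior_Icc] at hy
      apply hball
      rw [Metric.mem_ball, Real.dist_eq, abs_of_pos (by linarith [hy.1])]
      linarith [hy.2]
    intro t ht
    have := hanti (left_mem_Icc.mpr (by linarith)) ⟨ht.1.le, ht.2⟩ ht.1
    rwa [hd0] at this
  intro t ht
  by_contra hcon
  push_neg at hcon
  have htδ : P + δ < t := by
    by_contra hle
    push_neg at hle
    exact absurd (hlocal t ⟨ht.1, hle⟩) (not_lt.mpr hcon)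
  -- B and its infimum
  set B := Icc (P + δ) x ∩ {r : ℝ | 0 ≤ deriv s r} with hB
  have hBne : B.Nonempty := ⟨t, ⟨⟨htδ.le, ht.2⟩, hcon⟩⟩
  have hBclosed : IsClosed B := isClosed_Icc.inter (isClosed_le continuous_const (gs_cont2 hs))
  have hBbdd : BddBelow B := ⟨P + δ, fun r hr => hr.1.1⟩
  set r := sInf B with hr
  have hrB : r ∈ B := IsClosed.csInf_mem hBclosed hBne hBbdd
  have hrx : r ≤ x := hrB.1.2
  have hrδ : P + δ ≤ r := hrB.1.1
  have hrP : P < r := by linarith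
  have hneg : ∀ y ∈ Ioo P r, deriv s y < 0 := by
    intro y hy
    rcases le_or_gt y (P + δ) with h | h
    · exact hlocal y ⟨hy.1, h⟩
    · by_contra hc
      push_neg at hc
      exact absurd (csInf_le hBbdd ⟨⟨h.le, by linarith [hy.2]⟩, hc⟩) (not_le.mpr hy.2)
  have hrd0 : deriv s r = 0 := by
    have hge : 0 ≤ deriv s r := hrB.2
    have hle : deriv s r ≤ 0 := by
      have htend : Tendsto (deriv s) (nhdsWithin r (Iio r)) (nhds (deriv s r)) :=
        ((gs_cont2 hs).tendsto r).mono_left nhdsWithin_le_nhds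
      have hev : ∀ᶠ y in nhdsWithin r (Iio r), deriv s y ≤ 0 := by
        filter_upwards [Ioo_mem_nhdsLT_of_mem (⟨hrP, le_rfl⟩ : r ∈ Ioc P r)] with y hy
        exact (hneg y hy).le
      exact le_of_tendsto htend hev
    linarith
  have hsr1 : s r < 1 := by
    have hanti : StrictAntiOn s (Icc P r) := by
      apply strictAntiOn_of_deriv_neg (convex_Icc _ _) (gs_cont hs).continuousOn
      intro y hy
      rw [interior_Icc] at hy
      exact hneg y hy
    have := hanti (left_mem_Icc.mpr hrP.le) (right_mem_Icc.mpr hrP.le) hrP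
    rwa [hs1] at this
  have hsr0 : 0 ≤ s r := by
    rcases eq_or_lt_of_le hrx with h | h
    · rw [h]; exact hxe
    · exact (hpos r ⟨hrP, h⟩).le
  have he := gs_energy hm hs r
  rw [hrd0] at he
  have : (s r)^(2*m) < 1 := pow_lt_one₀ hsr0 hsr1 (by omega)
  nlinarith

end GS4

section GS5
variable {m : ℕ} {s : ℝ → ℝ} (hm : 1 ≤ m) (hs : IsGenSine m s)
include hm hs

lemma gs_fall_core {x : ℝ} (hPx : piGen m / 2 < x)
    (hneg : ∀ t ∈ Ioc (piGen m / 2) x, deriv s t < 0)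
    (hpos : ∀ t ∈ Ioo (piGen m / 2) x, 0 < s t) (hxe : 0 ≤ s x) :
    ∀ c ∈ Ioo (piGen m / 2) x, gsF m (s x) + x = gsF m (s c) + c := by
  obtain ⟨hd0, hs1, _⟩ := gs_rise hm hs
  set P := piGen m / 2 with hP
  have hanti : StrictAntiOn s (Icc P x) := by
    apply strictAntiOn_of_deriv_neg (convex_Icc _ _) (gs_cont hs).continuousOn
    intro y hy
    rw [interior_Icc] at hy
    exact hneg y ⟨hy.1, hy.2.le⟩
  have hle1 : ∀ y ∈ Icc P x, s y ≤ 1 := by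
    intro y hy
    have := hanti.antitoneOn (left_mem_Icc.mpr hPx.le) hy hy.1
    rwa [hs1] at this
  have hge0 : ∀ y ∈ Icc P x, 0 ≤ s y := by
    intro y hy
    rcases eq_or_lt_of_le hy.2 with h | h
    · rw [h]; exact hxe
    · rcases eq_or_lt_of_le hy.1 with h' | h'
      · rw [← h', hs1]; norm_num
      · exact (hpos y ⟨h', h⟩).le
  intro c hc
  set H : ℝ → ℝ := fun φ => gsF m (s φ) + φ with hH
  have hmaps : MapsTo s (Icc c x) (Icc 0 1) := by
    intro y hy
    have hy' : y ∈ Icc P x := ⟨le_trans hc.1.le hy.1, hy.2⟩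
    exact ⟨hge0 y hy', hle1 y hy'⟩
  have hHc : ContinuousOn H (Icc c x) :=
    ((gsF_contOn m hm).comp (gs_cont hs).continuousOn hmaps).add continuousOn_id
  have hder : ∀ y ∈ Ico c x, HasDerivWithinAt H 0 (Ici y) y := by
    intro y hy
    have hyP : P < y := lt_of_lt_of_le hc.1 hy.1
    have hu0 : 0 < s y := hpos y ⟨hyP, hy.2⟩
    have hu1 : s y < 1 := by
      have := hanti (left_mem_Icc.mpr hPx.le) ⟨hyP.le, hy.2.le⟩ hyP
      rwa [hs1] at this
    have hF : HasDerivAt (gsF m) (gsf m (s y)) (s y) := gsF_hasDeriv m hm hu0.le hu1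
    have hcomp : HasDerivAt (fun φ => gsF m (s φ)) (gsf m (s y) * deriv s y) y := by
      have := hF.comp y (gs_hasDeriv hs y)
      exact this
    have he := gs_energy hm hs y
    have hdneg : deriv s y < 0 := hneg y ⟨hyP, hy.2.le⟩
    have hbase : 0 < 1 - (s y)^(2*m) := by nlinarith
    have hsq : deriv s y = -Real.sqrt (1 - (s y)^(2*m)) := by
      have h1 : (1 - (s y)^(2*m)) = (deriv s y)^2 := by linarith
      rw [h1, Real.sqrt_sq_eq_abs, abs_of_neg hdneg, neg_neg]
    have hval : gsf m (s y) * deriv s y = -1 := by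
      rw [hsq, Real.sqrt_eq_rpow, gsf, mul_neg, ← Real.rpow_add hbase]
      norm_num
    have : HasDerivAt H 0 y := by
      have := hcomp.add (hasDerivAt_id y)
      rw [hval] at this
      exact this.congr_deriv (by norm_num)
    exact this.hasDerivWithinAt
  have hconst := constant_of_has_deriv_right_zero hHc hder
  exact hconst x (right_mem_Icc.mpr (le_of_lt hc.2))

lemma gs_fall :
    s (piGen m) = 0 ∧ deriv s (piGen m) = -1 ∧ piGen m / 2 < piGen m ∧
      (∀ t ∈ Ico (piGen m / 2) (piGen m), 0 < s t) ∧
      (∀ t ∈ Ioc (piGen m / 2) (piGen m), deriv s t < 0) := by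
  obtain ⟨hd0, hs1, _⟩ := gs_rise hm hs
  set P := piGen m / 2 with hP
  have hp1 : piGen m = 2 * gsF m 1 := piGen_eq m
  have hF1pos := gsF_one_pos m hm
  set Z := Ici P ∩ {x : ℝ | s x ≤ 0} with hZ
  have hZclosed : IsClosed Z := isClosed_Ici.inter (isClosed_le (gs_cont hs) continuous_const)
  have hZbdd : BddBelow Z := ⟨P, fun x hx => hx.1⟩
  have hZne : Z.Nonempty := by
    by_contra hne
    rw [Set.not_nonempty_iff_eq_empty] at hne
    have hallpos : ∀ x, P ≤ x → 0 < s x := by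
      intro x hx
      by_contra h
      push_neg at h
      have : x ∈ Z := ⟨hx, h⟩
      rw [hne] at this
      exact this
    set x := gsF m 1 + P + 2 with hx
    have hPx : P < x := by linarith
    have hposO : ∀ t ∈ Ioo P x, 0 < s t := fun t ht => hallpos t ht.1.le
    have hneg := gs_fall_neg hm hs hPx hposO (hallpos x (by linarith)).le
    have hid := gs_fall_core hm hs hPx hneg hposO (hallpos x (by linarith)).le
    set c := P + 1 with hc
    have hcmem : c ∈ Ioo P x := ⟨by linarith, by linarith⟩
    have := hid c hcmem
    -- gsF m (s x) + x = gsF m (s c) + c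
    have hsc01 : s c ∈ Icc (0:ℝ) 1 := by
      constructor
      · exact (hallpos c (by linarith)).le
      · -- s c ≤ s P = 1 by antitonicity
        have hanti : StrictAntiOn s (Icc P x) := by
          apply strictAntiOn_of_deriv_neg (convex_Icc _ _) (gs_cont hs).continuousOn
          intro y hy
          rw [interior_Icc] at hy
          exact hneg y ⟨hy.1, hy.2.le⟩
        have := hanti.antitoneOn (left_mem_Icc.mpr hPx.le) ⟨by linarith, by linarith⟩ (by linarith : P ≤ c)
        rwa [hs1] at this
    have hsx0 : 0 ≤ s x := (hallpos x (by linarith)).le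
    have hsx1 : s x ≤ 1 := by
      have hanti : StrictAntiOn s (Icc P x) := by
        apply strictAntiOn_of_deriv_neg (convex_Icc _ _) (gs_cont hs).continuousOn
        intro y hy
        rw [interior_Icc] at hy
        exact hneg y ⟨hy.1, hy.2.le⟩
      have := hanti.antitoneOn (left_mem_Icc.mpr hPx.le) (right_mem_Icc.mpr hPx.le) hPx.le
      rwa [hs1] at this
    have h1 := gsF_nonneg m hm hsx0 hsx1
    have h2 := gsF_le_one m hm hsc01.1 hsc01.2
    linarith
  set T := sInf Z with hT
  have hTZ : T ∈ Z := IsClosed.csInf_mem hZclosed hZne hZbdd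
  have hTP : P < T := by
    rcases eq_or_lt_of_le (show P ≤ T from hTZ.1) with h | h
    · exfalso
      have := hTZ.2
      rw [← h] at this
      simp only [mem_setOf_eq, hs1] at this
      linarith
    · exact h
  have hposI : ∀ y ∈ Ico P T, 0 < s y := by
    intro y hy
    by_contra h
    push_neg at h
    exact absurd (csInf_le hZbdd ⟨hy.1, h⟩) (not_le.mpr hy.2)
  have hsT0 : s T = 0 := by
    have hle : s T ≤ 0 := hTZ.2
    have hge : 0 ≤ s T := by
      have htend : Tendsto s (nhdsWithin T (Iio T)) (nhds (s T)) :=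
        ((gs_cont hs).tendsto T).mono_left nhdsWithin_le_nhds
      have hev : ∀ᶠ y in nhdsWithin T (Iio T), 0 ≤ s y := by
        filter_upwards [Ioo_mem_nhdsLT_of_mem (⟨hTP, le_rfl⟩ : T ∈ Ioc P T)] with y hy
        exact (hposI y ⟨hy.1.le, hy.2⟩).le
      exact ge_of_tendsto htend hev
    linarith
  have hposO : ∀ t ∈ Ioo P T, 0 < s t := fun t ht => hposI t ⟨ht.1.le, ht.2⟩
  have hneg := gs_fall_neg hm hs hTP hposO (le_of_eq hsT0.symm)
  have hid := gs_fall_core hm hs hTP hneg hposO (le_of_eq hsT0.symm)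
  -- identity: ∀ c ∈ Ioo P T, T = gsF m (s c) + c
  have hid' : ∀ c ∈ Ioo P T, gsF m (s c) + c = T := by
    intro c hc
    have := hid c hc
    rw [hsT0, gsF_zero, zero_add] at this
    exact this.symm
  -- limit as c → P from the right
  have hTeq : T = piGen m := by
    have hclos : P ∈ closure (Ioo P T) := by
      rw [closure_Ioo (ne_of_lt hTP)]
      exact ⟨le_rfl, hTP.le⟩
    have hNB : (nhdsWithin P (Ioo P T)).NeBot := mem_closure_iff_nhdsWithin_neBot.mp hclos
    have hanti : StrictAntiOn s (Icc P T) := by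
      apply strictAntiOn_of_deriv_neg (convex_Icc _ _) (gs_cont hs).continuousOn
      intro y hy
      rw [interior_Icc] at hy
      exact hneg y ⟨hy.1, hy.2.le⟩
    have hmaps : MapsTo s (Ioo P T) (Icc 0 1) := by
      intro y hy
      refine ⟨(hposO y hy).le, ?_⟩
      have := hanti.antitoneOn (left_mem_Icc.mpr hTP.le) ⟨hy.1.le, hy.2.le⟩ hy.1.le
      rwa [hs1] at this
    have h1mem : s P ∈ Icc (0:ℝ) 1 := by rw [hs1]; exact ⟨by norm_num, le_rfl⟩
    have houter : ContinuousWithinAt (gsF m) (Icc 0 1) (s P) := (gsF_contOn m hm) (s P) h1mem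
    have hinner : ContinuousWithinAt s (Ioo P T) P := (gs_cont hs).continuousWithinAt
    have hswa : ContinuousWithinAt (fun c => gsF m (s c)) (Ioo P T) P :=
      houter.comp hinner hmaps
    have htend : Tendsto (fun c => gsF m (s c) + c) (nhdsWithin P (Ioo P T))
        (nhds (gsF m (s P) + P)) := by
      exact (hswa.tendsto.add (continuousWithinAt_id.tendsto))
    have htend2 : Tendsto (fun c => gsF m (s c) + c) (nhdsWithin P (Ioo P T)) (nhds T) := by
      apply Tendsto.congr' _ tendsto_const_nhds
      filter_upwards [self_mem_nhdsWithin] with c hc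
      exact (hid' c hc).symm
    have := tendsto_nhds_unique htend2 htend
    rw [hs1] at this
    rw [this, hp1, hP, hp1]
    ring
  rw [← hTeq]
  have hdT : deriv s T < 0 := hneg T ⟨hTP, le_rfl⟩
  have he := gs_energy hm hs T
  rw [hsT0] at he
  have hz : (0:ℝ)^(2*m) = 0 := zero_pow (by omega)
  rw [hz] at he
  have hfact : (deriv s T - (-1)) * (deriv s T - 1) = 0 := by nlinarith
  have hdT1 : deriv s T = -1 := by
    rcases mul_eq_zero.mp hfact with h | h
    · linarith
    · linarith
  exact ⟨hsT0, hdT1, hTP, hposI, hneg⟩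

end GS5


end Aux

open Set in
/-- the comparison function `K(φ) = 2(π_m - φ + s(φ)s'(φ))/s(φ)^(m+1)`
is strictly decreasing on `[π_m/2, π_m)`, `K(π_m/2) = π_m`, and `K(φ) → 0` as
`φ → π_m⁻`. -/
theorem comparison_function_K (m : ℕ) (hm : 1 ≤ m) (s : ℝ → ℝ)
    (hs : IsGenSine m s) :
    StrictAntiOn (fun φ => 2 * (piGen m - φ + s φ * deriv s φ) / s φ ^ (m + 1))
      (Set.Ico (piGen m / 2) (piGen m)) ∧
    2 * (piGen m - piGen m / 2 + s (piGen m / 2) * deriv s (piGen m / 2))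
        / s (piGen m / 2) ^ (m + 1) = piGen m ∧
    Tendsto (fun φ => 2 * (piGen m - φ + s φ * deriv s φ) / s φ ^ (m + 1))
      (nhdsWithin (piGen m) (Set.Iio (piGen m))) (nhds 0) := by
  obtain ⟨k, rfl⟩ : ∃ k, m = k + 1 := ⟨m - 1, by omega⟩
  clear hm
  set m := k + 1 with hmdef
  have hm : 1 ≤ m := by omega
  obtain ⟨hd0, hs1, _⟩ := gs_rise hm hs
  obtain ⟨hsp0, hdp1, hPp, hspos, hdneg⟩ := gs_fall hm hs
  set p := piGen m with hp
  set P := p / 2 with hPdef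
  set N : ℝ → ℝ := fun φ => p - φ + s φ * deriv s φ with hN
  have hexp1 : 2 * m - 1 = 2 * k + 1 := by omega
  have hexp2 : 2 * m = 2 * k + 2 := by omega
  -- derivative of N
  have hNd : ∀ x, HasDerivAt N (-((m:ℝ)+1) * s x ^ (2*m)) x := by
    intro x
    have h1 : HasDerivAt (fun φ : ℝ => p - φ) (-1) x := by
      simpa using (hasDerivAt_id x).const_sub p
    have h2 : HasDerivAt (fun φ => s φ * deriv s φ)
        (deriv s x * deriv s x + s x * (-(m : ℝ) * s x ^ (2*m-1))) x :=
      (gs_hasDeriv hs x).mul (gs_hasDeriv2 hs x)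
    have h3 := h1.add h2
    refine h3.congr_deriv (Eq.symm ?_)
    have he := gs_energy hm hs x
    rw [hexp1]
    rw [hexp2] at he ⊢
    push_cast
    linear_combination -he
  -- derivative of the denominator
  have hDd : ∀ x, HasDerivAt (fun φ => s φ ^ (m+1)) (((m:ℝ)+1) * s x ^ m * deriv s x) x := by
    intro x
    have h := (gs_hasDeriv hs x).pow (m+1)
    refine h.congr_deriv (Eq.symm ?_)
    push_cast
    ring
  -- the auxiliary function G
  set G : ℝ → ℝ := fun t => s t ^ (2*m+1) + N t * deriv s t with hG
  have hGd : ∀ x, HasDerivAt G ((m:ℝ) * s x ^ (2*m-1) * (x - p)) x := by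
    intro x
    have h1 : HasDerivAt (fun t => s t ^ (2*m+1))
        (((2*m+1 : ℕ) : ℝ) * s x ^ (2*m) * deriv s x) x := by
      have := (gs_hasDeriv hs x).pow (2*m+1)
      norm_num at this
      refine this.congr_deriv (Eq.symm ?_)
      push_cast; ring
    have h2 : HasDerivAt (fun t => N t * deriv s t)
        ((-((m:ℝ)+1) * s x ^ (2*m)) * deriv s x + N x * (-(m : ℝ) * s x ^ (2*m-1))) x :=
      (hNd x).mul (gs_hasDeriv2 hs x)
    have h3 := h1.add h2
    refine h3.congr_deriv (Eq.symm ?_)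
    rw [hexp1, hexp2, hN]
    push_cast [hmdef]
    ring
  have hGp : G p = 0 := by
    rw [hG]
    simp only [hN, hsp0, hdp1, sub_self]
    rw [zero_pow (by omega : 2*m+1 ≠ 0)]
    ring
  have hGcont : Continuous G := by
    apply Continuous.add
    · exact (gs_cont hs).pow _
    · exact ((continuous_const.sub continuous_id).add ((gs_cont hs).mul (gs_cont2 hs))).mul (gs_cont2 hs)
  have hGpos : ∀ x ∈ Ioo P p, 0 < G x := by
    intro x hx
    have hanti : StrictAntiOn G (Icc x p) := by
      apply strictAntiOn_of_deriv_neg (convex_Icc _ _) hGcont.continuousOn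
      intro t ht
      rw [interior_Icc] at ht
      rw [(hGd t).deriv]
      have hst : 0 < s t := hspos t ⟨le_trans hx.1.le ht.1.le, ht.2⟩
      apply mul_neg_of_pos_of_neg
      · positivity
      · linarith [ht.2]
    have := hanti (left_mem_Icc.mpr hx.2.le) (right_mem_Icc.mpr hx.2.le) hx.2
    rwa [hGp] at this
  -- value of K at P
  have hmid : 2 * (p - P + s P * deriv s P) / s P ^ (m + 1) = p := by
    rw [hs1, hd0, one_pow, mul_zero, add_zero]
    rw [hPdef]
    ring
  refine ⟨?_, hmid, ?_⟩
  · -- strict antitonicity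
    apply strictAntiOn_of_deriv_neg (convex_Ico _ _)
    · apply ContinuousOn.div
      · exact (continuous_const.mul ((continuous_const.sub continuous_id).add
          ((gs_cont hs).mul (gs_cont2 hs)))).continuousOn
      · exact ((gs_cont hs).pow _).continuousOn
      · intro x hx
        exact pow_ne_zero _ (ne_of_gt (hspos x hx))
    · intro x hx
      rw [interior_Ico] at hx
      have hsx : 0 < s x := hspos x ⟨hx.1.le, hx.2⟩
      have hKd : HasDerivAt (fun φ => 2 * (p - φ + s φ * deriv s φ) / s φ ^ (m + 1))
          ((2 * (-((m:ℝ)+1) * s x ^ (2*m)) * s x ^ (m+1) -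
            2 * N x * (((m:ℝ)+1) * s x ^ m * deriv s x)) / (s x ^ (m+1))^2) x := by
        exact ((hNd x).const_mul 2).div (hDd x) (pow_ne_zero _ (ne_of_gt hsx))
      rw [hKd.deriv]
      apply div_neg_of_neg_of_pos
      · have hnum : 2 * (-((m:ℝ)+1) * s x ^ (2*m)) * s x ^ (m+1) -
            2 * N x * (((m:ℝ)+1) * s x ^ m * deriv s x)
            = -2 * ((m:ℝ)+1) * s x ^ m * G x := by
          rw [hG, hN, hexp2]
          push_cast
          ring
        rw [hnum]
        have hGx := hGpos x hx
        have h1 : (0:ℝ) < ((m:ℝ)+1) * s x ^ m * G x :=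
          mul_pos (mul_pos (by positivity) (pow_pos hsx m)) hGx
        nlinarith
      · positivity
  · -- the limit
    apply HasDerivAt.lhopital_zero_nhdsLT
      (f' := fun x => 2 * (-((m:ℝ)+1) * s x ^ (2*m)))
      (g' := fun x => ((m:ℝ)+1) * s x ^ m * deriv s x)
    · filter_upwards [Ioo_mem_nhdsLT_of_mem (⟨hPp, le_rfl⟩ : p ∈ Ioc P p)] with x hx
      exact (hNd x).const_mul 2
    · filter_upwards [Ioo_mem_nhdsLT_of_mem (⟨hPp, le_rfl⟩ : p ∈ Ioc P p)] with x hx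
      exact hDd x
    · filter_upwards [Ioo_mem_nhdsLT_of_mem (⟨hPp, le_rfl⟩ : p ∈ Ioc P p)] with x hx
      have hsx : 0 < s x := hspos x ⟨hx.1.le, hx.2⟩
      have hdx : deriv s x < 0 := hdneg x ⟨hx.1, hx.2.le⟩
      have h2 : (0:ℝ) < ((m:ℝ)+1) * s x ^ m := mul_pos (by positivity) (pow_pos hsx m)
      have h3 := mul_neg_of_pos_of_neg h2 hdx
      intro hzero
      rw [hzero] at h3
      exact lt_irrefl 0 h3
    · -- f → 0
      have hc : Continuous (fun φ => 2 * N φ) :=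
        continuous_const.mul ((continuous_const.sub continuous_id).add
          ((gs_cont hs).mul (gs_cont2 hs)))
      have := (hc.tendsto p).mono_left (nhdsWithin_le_nhds (s := Iio p))
      have hval : 2 * N p = 0 := by
        rw [hN]; simp [hsp0, hdp1]
      rw [hval] at this
      exact this
    · -- g → 0
      have hc : Continuous (fun φ => s φ ^ (m+1)) := (gs_cont hs).pow _
      have := (hc.tendsto p).mono_left (nhdsWithin_le_nhds (s := Iio p))
      have hval : s p ^ (m+1) = 0 := by
        rw [hsp0]; exact zero_pow (by omega)
      rw [hval] at this
      exact this
    · -- f'/g' → 0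
      apply Tendsto.congr' (f₁ := fun x => (-2 * s x ^ m) / deriv s x)
      · filter_upwards [Ioo_mem_nhdsLT_of_mem (⟨hPp, le_rfl⟩ : p ∈ Ioc P p)] with x hx
        have hsx : 0 < s x := hspos x ⟨hx.1.le, hx.2⟩
        have hm1 : ((m:ℝ)+1) ≠ 0 := by positivity
        have hsm : s x ^ m ≠ 0 := pow_ne_zero _ (ne_of_gt hsx)
        have hdx : deriv s x ≠ 0 := ne_of_lt (hdneg x ⟨hx.1, hx.2.le⟩)
        have h2m : s x ^ (2*m) = s x ^ m * s x ^ m := by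
          rw [← pow_add]; congr 1; omega
        rw [h2m]
        field_simp
      · have hnum : Tendsto (fun x => -2 * s x ^ m) (nhdsWithin p (Iio p)) (nhds 0) := by
          have hc : Continuous (fun x => -2 * s x ^ m) := continuous_const.mul ((gs_cont hs).pow _)
          have := (hc.tendsto p).mono_left (nhdsWithin_le_nhds (s := Iio p))
          rw [hsp0, zero_pow (by omega : m ≠ 0), mul_zero] at this
          exact this
        have hden : Tendsto (fun x => deriv s x) (nhdsWithin p (Iio p)) (nhds (-1)) := by
          have := ((gs_cont2 hs).tendsto p).mono_left (nhdsWithin_le_nhds (s := Iio p))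
          rwa [hdp1] at this
        have := hnum.div hden (by norm_num)
        rw [zero_div] at this; exact this
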